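/- Assume linear travel times: t_a(z) = k_a z + b_a with k_a > 0 and b_a ≥ 0 for every link a, and let K = diag(k). Let x̃ be a baseline equilibrium (α = 0) with multiplier λ̃^H, let 𝓥 = { p ∈ 𝓟 : x̃_p > 0 }, and let Δ_𝓥 be the submatrix of Δ formed by the columns indexed by 𝓥. Assume: (a) the columns of Δ_𝓥 are linearly independent; (b) there is a unique path q minimizing C_p^A(Δx̃) over p ∈ 𝓟, and q ∉ 𝓥; (c) C_p^H(Δx̃) > λ̃^H for every p ∉ 𝓥. Set M = Δ_𝓥ᵀ K Δ_𝓥 and γ = (𝟙ᵀ M⁻¹ Δ_𝓥ᵀ K Δ e_q − 1)/(𝟙ᵀ M⁻¹ 𝟙), where e_q ∈ ℝ^𝓟 is the standard basis vector of path q and 𝟙 is the all-ones vector in ℝ^𝓥. If C_q^H(Δx̃) − λ̃^H + γ > 0, then there exists α₀ > 0 such that for every α ∈ (0, α₀) and every equilibrium (x^H, x^A) with autonomous fraction α, one has S(Δ(x^H + x^A)) > S(Δx̃). -/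

import Mathlib

open scoped BigOperators

/-- Aggregated link flow `f = Δ x`. -/
noncomputable def aggFlow {L P : Type*} [Fintype P] (Δ : L → P → ℝ) (x : P → ℝ) : L → ℝ :=
  fun a => ∑ p, Δ a p * x p

/-- Human path cost `C_p^H(f) = Σ_a Δ_{ap} t_a(f_a)`. -/
noncomputable def CH {L P : Type*} [Fintype L] (Δ : L → P → ℝ) (t : L → ℝ → ℝ)
    (f : L → ℝ) (p : P) : ℝ :=
  ∑ a, Δ a p * t a (f a)

/-- Autonomous (marginal social) path cost
`C_p^A(f) = Σ_a Δ_{ap} (t_a(f_a) + f_a t_a'(f_a))`. -/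
noncomputable def CA {L P : Type*} [Fintype L] (Δ : L → P → ℝ) (t : L → ℝ → ℝ)
    (f : L → ℝ) (p : P) : ℝ :=
  ∑ a, Δ a p * (t a (f a) + f a * deriv (t a) (f a))

/-- Social cost `S(f) = Σ_a f_a t_a(f_a)`. -/
noncomputable def Scost {L : Type*} [Fintype L] (t : L → ℝ → ℝ) (f : L → ℝ) : ℝ :=
  ∑ a, f a * t a (f a)

/-- Equilibrium with autonomous fraction `α`: a feasible path flow pattern
together with multipliers `λ^H, λ^A` satisfying the Wardrop-like conditions. -/
noncomputable def IsEquilibrium {L P : Type*} [Fintype L] [Fintype P]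
    (Δ : L → P → ℝ) (t : L → ℝ → ℝ) (α : ℝ) (xH xA : P → ℝ) : Prop :=
  (∀ p, 0 ≤ xH p) ∧ (∀ p, 0 ≤ xA p) ∧ (∑ p, xH p = 1 - α) ∧ (∑ p, xA p = α) ∧
  ∃ lamH lamA : ℝ, ∀ p : P,
    (lamH ≤ CH Δ t (aggFlow Δ (fun r => xH r + xA r)) p ∧
      (0 < xH p → CH Δ t (aggFlow Δ (fun r => xH r + xA r)) p = lamH)) ∧
    (lamA ≤ CA Δ t (aggFlow Δ (fun r => xH r + xA r)) p ∧
      (0 < xA p → CA Δ t (aggFlow Δ (fun r => xH r + xA r)) p = lamA))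

/-- Baseline equilibrium (`α = 0`): a single nonnegative unit-demand path flow
vector satisfying the human Wardrop condition. -/
noncomputable def IsBaselineEquilibrium {L P : Type*} [Fintype L] [Fintype P]
    (Δ : L → P → ℝ) (t : L → ℝ → ℝ) (xt : P → ℝ) : Prop :=
  (∀ p, 0 ≤ xt p) ∧ (∑ p, xt p = 1) ∧
  ∃ lam : ℝ, ∀ p : P,
    lam ≤ CH Δ t (aggFlow Δ xt) p ∧ (0 < xt p → CH Δ t (aggFlow Δ xt) p = lam)

/-- BPR assumption: `t_a(z) = k_a z^n + b_a` for `z ≥ 0`, with `k_a > 0`,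
`b_a ≥ 0`, and exponent `n ≥ 1`. -/
def IsBPR {L : Type*} (t : L → ℝ → ℝ) (n : ℝ) (k b : L → ℝ) : Prop :=
  1 ≤ n ∧ (∀ a, 0 < k a) ∧ (∀ a, 0 ≤ b a) ∧
  ∀ a, ∀ z : ℝ, 0 ≤ z → t a z = k a * z ^ n + b a

/-!
For small `α` the equilibrium flow `f` stays `O(α)`-close to the baseline flow `f̃`: the
variational inequality between the two human Wardrop equilibria, together with Cauchy–Schwarz
in the `K`-weighted norm, gives `∑ₐ kₐ δₐ² ≤ (∑ₐ kₐ) α²` for `δ = f - f̃`, so every path cost moves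
by `O(α)`. The strict gaps (b) and (c) then persist: humans use exactly the baseline support `𝓥`
and all autonomous flow takes `q`. On `𝓥` all human costs move by the same `λ^H - λ̃^H`, so the
support perturbation `y = x^H|𝓥 - x̃|𝓥` solves `M y = (λ^H - λ̃^H) 𝟙 - α Δ_𝓥ᵀ K Δ e_q` with
`𝟙ᵀ y = -α`, whence `λ^H - λ̃^H = α γ`. For linear costs
`S(f) - S(f̃) = ∑ₐ kₐ δₐ² + α (C_q^H(f̃) - λ̃^H) + (λ^H - λ̃^H) ≥ α (C_q^H(f̃) - λ̃^H + γ) > 0`.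
-/

open Finset Matrix Filter Topology

section Wardrop

variable {P : Type*}

def IsWardrop (x c : P → ℝ) (lam : ℝ) : Prop :=
  ∀ p, lam ≤ c p ∧ (0 < x p → c p = lam)

namespace IsWardrop

variable {x c x' c' : P → ℝ} {lam lam' : ℝ}

theorem sum_mul_eq [Fintype P] (h : IsWardrop x c lam) (hx : 0 ≤ x) :
    ∑ p, x p * c p = (∑ p, x p) * lam := by
  rw [sum_mul]
  refine sum_congr rfl fun p _ => ?_
  rcases (hx p).eq_or_lt with hp | hp
  · simp [← hp]
  · rw [(h p).2 hp]

theorem sum_mul_le [Fintype P] (h : IsWardrop x c lam) {y : P → ℝ} (hy : 0 ≤ y) :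
    (∑ p, y p) * lam ≤ ∑ p, y p * c p := by
  rw [sum_mul]
  exact sum_le_sum fun p _ => mul_le_mul_of_nonneg_left (h p).1 (hy p)

/-- The variational inequality satisfied by two Wardrop equilibria of different masses. -/
theorem sum_smul_sub_mul_sub_nonpos [Fintype P] (h : IsWardrop x c lam) (h' : IsWardrop x' c' lam')
    (hx : 0 ≤ x) (hx' : 0 ≤ x') :
    ∑ p, ((∑ r, x' r) * x p - (∑ r, x r) * x' p) * (c p - c' p) ≤ 0 := by
  have hs : 0 ≤ ∑ r, x r := sum_nonneg fun r _ => hx r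
  have hs' : 0 ≤ ∑ r, x' r := sum_nonneg fun r _ => hx' r
  have i1 := mul_le_mul_of_nonneg_left (h.sum_mul_le hx') hs
  have i2 := mul_le_mul_of_nonneg_left (h'.sum_mul_le hx) hs'
  have expand : ∑ p, ((∑ r, x' r) * x p - (∑ r, x r) * x' p) * (c p - c' p) =
      (∑ r, x' r) * (∑ p, x p * c p) - (∑ r, x' r) * (∑ p, x p * c' p)
        - (∑ r, x r) * (∑ p, x' p * c p) + (∑ r, x r) * (∑ p, x' p * c' p) := by
    simp only [mul_sum, ← sum_sub_distrib, ← sum_add_distrib]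
    exact sum_congr rfl fun p _ => by ring
  rw [expand, h.sum_mul_eq hx, h'.sum_mul_eq hx']
  linarith

theorem eq_zero_of_add_lt (h : IsWardrop x c lam) {ε : ℝ} (hc : ∀ p, |c p - c' p| ≤ ε)
    {p : P} (hx : 0 ≤ x p) {r : P} (hlt : c' r + 2 * ε < c' p) : x p = 0 := by
  refine hx.eq_or_lt.elim Eq.symm fun hp => absurd hlt (not_lt.2 ?_)
  have := abs_le.1 (hc p)
  have := abs_le.1 (hc r)
  linarith [(h p).2 hp, (h r).1]

end IsWardrop

end Wardrop

theorem sum_mul_sq_le_of_le_sum_mul_mul {ι : Type*} [Fintype ι] {k δ u : ι → ℝ} (hk : 0 ≤ k)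
    (h : ∑ i, k i * δ i ^ 2 ≤ ∑ i, k i * δ i * u i) :
    ∑ i, k i * δ i ^ 2 ≤ ∑ i, k i * u i ^ 2 := by
  have hE : 0 ≤ ∑ i, k i * δ i ^ 2 := sum_nonneg fun i _ => mul_nonneg (hk i) (sq_nonneg _)
  have hU : 0 ≤ ∑ i, k i * u i ^ 2 := sum_nonneg fun i _ => mul_nonneg (hk i) (sq_nonneg _)
  have hcs : (∑ i, k i * δ i * u i) ^ 2 ≤ (∑ i, k i * δ i ^ 2) * ∑ i, k i * u i ^ 2 :=
    sum_sq_le_sum_mul_sum_of_sq_le_mul _ (fun i _ => mul_nonneg (hk i) (sq_nonneg _))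
      (fun i _ => mul_nonneg (hk i) (sq_nonneg _)) fun i _ => le_of_eq (by ring)
  nlinarith [pow_le_pow_left₀ hE h 2]

section LinearCost

variable {L P : Type*} {Δ : L → P → ℝ} {t : L → ℝ → ℝ} {k b : L → ℝ}

theorem aggFlow_add [Fintype P] (Δ : L → P → ℝ) (x x' : P → ℝ) (a : L) :
    aggFlow Δ (fun p => x p + x' p) a = aggFlow Δ x a + aggFlow Δ x' a := by
  simp only [aggFlow, mul_add, sum_add_distrib]

theorem aggFlow_sub [Fintype P] (Δ : L → P → ℝ) (x x' : P → ℝ) (a : L) :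
    aggFlow Δ (fun p => x p - x' p) a = aggFlow Δ x a - aggFlow Δ x' a := by
  simp only [aggFlow, mul_sub, sum_sub_distrib]

theorem sum_aggFlow_mul [Fintype L] [Fintype P] (Δ : L → P → ℝ) (x : P → ℝ) (u : L → ℝ) :
    ∑ a, aggFlow Δ x a * u a = ∑ p, x p * ∑ a, Δ a p * u a := by
  simp only [aggFlow, sum_mul, mul_sum]
  rw [sum_comm]
  exact sum_congr rfl fun p _ => sum_congr rfl fun a _ => by ring

theorem aggFlow_nonneg [Fintype P] (hΔ : ∀ a p, 0 ≤ Δ a p) {x : P → ℝ} (hx : 0 ≤ x) (a : L) :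
    0 ≤ aggFlow Δ x a :=
  sum_nonneg fun p _ => mul_nonneg (hΔ a p) (hx p)

theorem aggFlow_le_sum [Fintype P] (hΔ : ∀ a p, Δ a p ≤ 1) {x : P → ℝ} (hx : 0 ≤ x) (a : L) :
    aggFlow Δ x a ≤ ∑ p, x p :=
  sum_le_sum fun p _ => mul_le_of_le_one_left (hx p) (hΔ a p)

theorem CH_sub_CH [Fintype L] (hlin : ∀ a z, t a z = k a * z + b a) (f g : L → ℝ) (p : P) :
    CH Δ t f p - CH Δ t g p = ∑ a, Δ a p * (k a * (f a - g a)) := by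
  simp only [CH, hlin, ← sum_sub_distrib]
  exact sum_congr rfl fun a _ => by ring

theorem CA_sub_CA [Fintype L] (hlin : ∀ a z, t a z = k a * z + b a) (f g : L → ℝ) (p : P) :
    CA Δ t f p - CA Δ t g p = 2 * (CH Δ t f p - CH Δ t g p) := by
  have hderiv : ∀ a z, deriv (t a) z = k a := fun a z => by
    rw [show t a = fun z => k a * z + b a from funext (hlin a)]
    simp
  simp only [CA, CH, hderiv, hlin, ← sum_sub_distrib, mul_sum]
  exact sum_congr rfl fun a _ => by ring

theorem Scost_sub [Fintype L] [Fintype P] (hlin : ∀ a z, t a z = k a * z + b a) (x x' : P → ℝ) :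
    Scost t (aggFlow Δ x) - Scost t (aggFlow Δ x') =
      ∑ a, k a * (aggFlow Δ x a - aggFlow Δ x' a) ^ 2
        + ∑ p, (x p - x' p) * CH Δ t (aggFlow Δ x') p
        + ∑ p, x' p * (CH Δ t (aggFlow Δ x) p - CH Δ t (aggFlow Δ x') p) := by
  have hcross : ∑ p, x' p * (CH Δ t (aggFlow Δ x) p - CH Δ t (aggFlow Δ x') p) =
      ∑ a, aggFlow Δ x' a * (k a * (aggFlow Δ x a - aggFlow Δ x' a)) := by
    simp only [CH_sub_CH hlin, sum_aggFlow_mul]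
  have hlinear : ∑ p, (x p - x' p) * CH Δ t (aggFlow Δ x') p =
      ∑ a, (aggFlow Δ x a - aggFlow Δ x' a) * t a (aggFlow Δ x' a) := by
    simp only [CH, ← sum_aggFlow_mul, aggFlow_sub]
  rw [hcross, hlinear, Scost, Scost, ← sum_sub_distrib, ← sum_add_distrib, ← sum_add_distrib]
  exact sum_congr rfl fun a _ => by rw [hlin, hlin]; ring

theorem abs_CH_sub_CH_le [Fintype L] (hlin : ∀ a z, t a z = k a * z + b a) (hk : 0 ≤ k)
    (hΔ : ∀ a p, 0 ≤ Δ a p ∧ Δ a p ≤ 1) {f g : L → ℝ} {α : ℝ} (hα : 0 ≤ α)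
    (hfg : ∑ a, k a * (f a - g a) ^ 2 ≤ (∑ a, k a) * α ^ 2) :
    ∀ p : P, |CH Δ t f p - CH Δ t g p| ≤ (∑ a, k a) * α := by
  intro p
  have hK : 0 ≤ ∑ a, k a := sum_nonneg fun a _ => hk a
  rw [CH_sub_CH hlin]
  refine abs_le_of_sq_le_sq ?_ (mul_nonneg hK hα)
  calc (∑ a, Δ a p * (k a * (f a - g a))) ^ 2
      ≤ (∑ a, k a * Δ a p ^ 2) * ∑ a, k a * (f a - g a) ^ 2 :=
        sum_sq_le_sum_mul_sum_of_sq_le_mul _ (fun a _ => mul_nonneg (hk a) (sq_nonneg _))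
          (fun a _ => mul_nonneg (hk a) (sq_nonneg _)) fun a _ => le_of_eq (by ring)
    _ ≤ (∑ a, k a) * ((∑ a, k a) * α ^ 2) := by
        refine mul_le_mul (sum_le_sum fun a _ => ?_) hfg
          (sum_nonneg fun a _ => mul_nonneg (hk a) (sq_nonneg _)) hK
        exact mul_le_of_le_one_right (hk a) (pow_le_one₀ (hΔ a p).1 (hΔ a p).2)
    _ = ((∑ a, k a) * α) ^ 2 := by ring

theorem sum_mul_sq_aggFlow_sub_le [Fintype L] [Fintype P] (hlin : ∀ a z, t a z = k a * z + b a)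
    (hk : 0 ≤ k) (hΔ : ∀ a p, 0 ≤ Δ a p ∧ Δ a p ≤ 1) {xt : P → ℝ} {lamt : ℝ} (hxt0 : 0 ≤ xt)
    (hxt1 : ∑ p, xt p = 1) (hlamt : IsWardrop xt (CH Δ t (aggFlow Δ xt)) lamt)
    {α : ℝ} {xH xA : P → ℝ} (heq : IsEquilibrium Δ t α xH xA) :
    ∑ a, k a * (aggFlow Δ (fun r => xH r + xA r) a - aggFlow Δ xt a) ^ 2 ≤ (∑ a, k a) * α ^ 2 := by
  obtain ⟨hxH0, hxA0, hxH1, hxA1, lamH, _, hw⟩ := heq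
  set f := aggFlow Δ (fun r => xH r + xA r)
  set ft := aggFlow Δ xt
  set u : L → ℝ := fun a => aggFlow Δ xA a - α * ft a
  have hvi := IsWardrop.sum_smul_sub_mul_sub_nonpos (fun p => (hw p).1) hlamt hxH0 hxt0
  rw [hxt1, hxH1] at hvi
  have hcomb : ∀ a, aggFlow Δ (fun p => 1 * xH p - (1 - α) * xt p) a = f a - ft a - u a := by
    intro a
    simp only [f, ft, u, aggFlow, mul_sum, ← sum_sub_distrib]
    exact sum_congr rfl fun p _ => by ring
  have hδu : ∑ a, k a * (f a - ft a) ^ 2 ≤ ∑ a, k a * (f a - ft a) * u a := by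
    simp only [CH_sub_CH hlin, ← sum_aggFlow_mul, hcomb] at hvi
    have : ∑ a, (f a - ft a - u a) * (k a * (f a - ft a)) =
        ∑ a, k a * (f a - ft a) ^ 2 - ∑ a, k a * (f a - ft a) * u a := by
      rw [← sum_sub_distrib]
      exact sum_congr rfl fun a _ => by ring
    linarith
  have hα : 0 ≤ α := hxA1 ▸ sum_nonneg fun p _ => hxA0 p
  have hu : ∀ a, u a ^ 2 ≤ α ^ 2 := fun a => by
    have h1 := aggFlow_nonneg (fun a p => (hΔ a p).1) hxA0 a
    have h2 := hxA1 ▸ aggFlow_le_sum (fun a p => (hΔ a p).2) hxA0 a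
    have h3 := aggFlow_nonneg (fun a p => (hΔ a p).1) hxt0 a
    have h4 := hxt1 ▸ aggFlow_le_sum (fun a p => (hΔ a p).2) hxt0 a
    exact sq_le_sq' (by nlinarith) (by nlinarith)
  refine (sum_mul_sq_le_of_le_sum_mul_mul hk hδu).trans ?_
  rw [sum_mul]
  exact sum_le_sum fun a _ => mul_le_mul_of_nonneg_left (hu a) (hk a)

end LinearCost

section Gram

variable {L V : Type*} [Fintype L] [Fintype V] [DecidableEq L]

theorem gram_mulVec (D : Matrix L V ℝ) (k : L → ℝ) (y : V → ℝ) :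
    (Dᵀ * diagonal k * D) *ᵥ y = Dᵀ *ᵥ fun a => k a * (D *ᵥ y) a := by
  rw [← mulVec_mulVec, ← mulVec_mulVec]
  exact congrArg _ (funext fun a => mulVec_diagonal k _ a)

theorem posDef_gram {k : L → ℝ} (hk : ∀ a, 0 < k a) {D : Matrix L V ℝ}
    (hD : Function.Injective D.mulVec) : (Dᵀ * diagonal k * D).PosDef := by
  simpa [conjTranspose_eq_transpose_of_trivial] using
    (PosDef.diagonal hk).conjTranspose_mul_mul_same hD

variable [DecidableEq V]

theorem abs_le_of_abs_mulVec_le {M : Matrix V V ℝ} (hM : IsUnit M) {y B : V → ℝ} {α : ℝ}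
    (h : ∀ w, |(M *ᵥ y) w| ≤ α * B w) (v : V) : |y v| ≤ α * ∑ w, |M⁻¹ v w| * B w := by
  have hy : y = M⁻¹ *ᵥ (M *ᵥ y) := by
    rw [mulVec_mulVec, nonsing_inv_mul _ ((isUnit_iff_isUnit_det M).1 hM), one_mulVec]
  rw [hy, mul_sum]
  refine (abs_sum_le_sum_abs _ _).trans (sum_le_sum fun w _ => ?_)
  rw [abs_mul]
  nlinarith [abs_nonneg (M⁻¹ v w), h w]

theorem eq_mul_of_mulVec_eq [Nonempty V] {M : Matrix V V ℝ} (hM : M.PosDef) {y g : V → ℝ}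
    {c α : ℝ} (hMy : M *ᵥ y = fun v => c - α * g v) (hy : ∑ v, y v = -α) :
    c = α * ((dotProduct (fun _ => (1:ℝ)) (M⁻¹ *ᵥ g) - 1) /
      dotProduct (fun _ => (1:ℝ)) (M⁻¹ *ᵥ fun _ => (1:ℝ))) := by
  have hs : 0 < dotProduct (fun _ => (1:ℝ)) (M⁻¹ *ᵥ fun _ => (1:ℝ)) := by
    simpa using hM.inv.dotProduct_mulVec_pos (x := fun _ => (1:ℝ)) (Function.ne_iff.2
      ⟨Classical.arbitrary V, one_ne_zero⟩)
  have hy' : y = c • (M⁻¹ *ᵥ fun _ => (1:ℝ)) - α • (M⁻¹ *ᵥ g) := by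
    have hMy' : M *ᵥ y = c • (fun _ => (1:ℝ)) - α • g := by
      rw [hMy]; funext v; simp
    rw [← mulVec_smul, ← mulVec_smul, ← mulVec_sub, ← hMy', mulVec_mulVec,
      nonsing_inv_mul _ ((isUnit_iff_isUnit_det M).1 hM.isUnit), one_mulVec]
  have hsum : ∑ v, y v = dotProduct (fun _ => (1:ℝ)) y := by simp [dotProduct]
  rw [hsum, hy', dotProduct_sub, dotProduct_smul, dotProduct_smul, smul_eq_mul, smul_eq_mul] at hy
  field_simp
  linarith

end Gram

theorem eventually_forall_mul_lt {ι : Type*} [Finite ι] (A B : ι → ℝ) (hB : ∀ i, 0 < B i) :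
    ∀ᶠ α in 𝓝 (0:ℝ), ∀ i, α * A i < B i :=
  eventually_all.2 fun i => ((continuous_id.mul continuous_const).tendsto' 0 0 (by simp)).eventually
    (gt_mem_nhds (hB i))

theorem sum_subtype_pos_eq_sum {P : Type*} [Fintype P] {x z : P → ℝ}
    (hz : ∀ p, ¬ 0 < x p → z p = 0) : ∑ v : {p // 0 < x p}, z v = ∑ p, z p := by
  rw [← Fintype.sum_subtype_add_sum_subtype (fun p => 0 < x p) z,
    Fintype.sum_eq_zero _ fun v : {p // ¬ 0 < x p} => hz v v.2, add_zero]

theorem exists_pos_of_sum_eq_one {P : Type*} [Fintype P] {x : P → ℝ} (hx : ∑ p, x p = 1) :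
    ∃ p, 0 < x p := by
  obtain ⟨p, -, hp⟩ := exists_lt_of_sum_lt (s := univ) (f := fun _ => (0:ℝ)) (g := x) (by simp [hx])
  exact ⟨p, hp⟩

section Support

variable {L P : Type*} [Fintype L] [Fintype P] {Δ : L → P → ℝ} {t : L → ℝ → ℝ} {k b : L → ℝ}

theorem gram_mulVec_sub [DecidableEq L] [DecidableEq P] (hlin : ∀ a z, t a z = k a * z + b a)
    {xt xH : P → ℝ} (hxt0 : 0 ≤ xt) (hxH : ∀ p, ¬ 0 < xt p → xH p = 0) (q : P) (α : ℝ)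
    (DV : Matrix L {p // 0 < xt p} ℝ) (hDV : DV = of fun a v => Δ a v.1) :
    (DVᵀ * diagonal k * DV) *ᵥ (fun v => xH v - xt v) = fun v : {p // 0 < xt p} =>
      (CH Δ t (aggFlow Δ fun r => xH r + (Pi.single q α : P → ℝ) r) v - CH Δ t (aggFlow Δ xt) v)
        - α * (DVᵀ *ᵥ fun a => k a * Δ a q) v := by
  have hxt : ∀ p, ¬ 0 < xt p → xt p = 0 := fun p hp => le_antisymm (not_lt.1 hp) (hxt0 p)
  have hflow : ∀ a, (DV *ᵥ fun v => xH v - xt v) a =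
      aggFlow Δ (fun r => xH r + (Pi.single q α : P → ℝ) r) a - aggFlow Δ xt a - α * Δ a q := by
    intro a
    rw [aggFlow_add, hDV]
    simp only [mulVec, dotProduct, of_apply]
    rw [sum_subtype_pos_eq_sum (z := fun p => Δ a p * (xH p - xt p))
      fun p hp => by simp [hxH p hp, hxt p hp]]
    simp [aggFlow, Pi.single_apply, mul_sub, sum_sub_distrib]
    ring
  funext v
  rw [gram_mulVec, CH_sub_CH hlin]
  simp only [hflow]
  subst hDV
  simp only [mulVec, dotProduct, transpose_apply, of_apply, mul_sum, ← sum_sub_distrib]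
  exact sum_congr rfl fun a _ => by ring

theorem Scost_sub_eq_of_support [DecidableEq P] (hlin : ∀ a z, t a z = k a * z + b a)
    {xt xH : P → ℝ} {lamt lamH α : ℝ} (q : P) (hxt0 : 0 ≤ xt) (hxt1 : ∑ p, xt p = 1)
    (hlamt : IsWardrop xt (CH Δ t (aggFlow Δ xt)) lamt) (hxH0 : 0 ≤ xH)
    (hxH1 : ∑ p, xH p = 1 - α) (hxH : ∀ p, ¬ 0 < xt p → xH p = 0)
    (hlamH : ∀ p, 0 < xt p →
      CH Δ t (aggFlow Δ fun r => xH r + (Pi.single q α : P → ℝ) r) p = lamH) :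
    Scost t (aggFlow Δ fun r => xH r + (Pi.single q α : P → ℝ) r) - Scost t (aggFlow Δ xt) =
      ∑ a, k a * (aggFlow Δ (fun r => xH r + (Pi.single q α : P → ℝ) r) a - aggFlow Δ xt a) ^ 2
        + α * (CH Δ t (aggFlow Δ xt) q - lamt) + (lamH - lamt) := by
  set f := aggFlow Δ fun r => xH r + (Pi.single q α : P → ℝ) r
  set ft := aggFlow Δ xt
  have hH : IsWardrop xH (CH Δ t ft) lamt := fun p =>
    ⟨(hlamt p).1, fun hp => (hlamt p).2 (by_contra fun h => hp.ne' (hxH p h))⟩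
  have hshift : ∑ p, (xH p + (Pi.single q α : P → ℝ) p - xt p) * CH Δ t ft p =
      α * (CH Δ t ft q - lamt) := by
    have h1 := hH.sum_mul_eq hxH0
    have h2 := hlamt.sum_mul_eq hxt0
    simp only [add_mul, sub_mul, sum_add_distrib, sum_sub_distrib, Pi.single_apply, ite_mul,
      zero_mul, sum_ite_eq', mem_univ, if_true] at h1 h2 ⊢
    rw [h1, h2, hxH1, hxt1]
    ring
  have hcross : ∑ p, xt p * (CH Δ t f p - CH Δ t ft p) = lamH - lamt := by
    calc ∑ p, xt p * (CH Δ t f p - CH Δ t ft p) = ∑ p, xt p * (lamH - lamt) := by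
          refine sum_congr rfl fun p _ => ?_
          rcases (hxt0 p).eq_or_lt with hp | hp
          · simp [← hp]
          · rw [hlamH p hp, (hlamt p).2 hp]
      _ = lamH - lamt := by rw [← sum_mul, hxt1, one_mul]
  rw [Scost_sub hlin, hshift, hcross]

theorem isEquilibrium_support [DecidableEq P] (hlin : ∀ a z, t a z = k a * z + b a)
    {xt : P → ℝ} {lamt : ℝ} (hxt1 : ∑ p, xt p = 1)
    (hlamt : IsWardrop xt (CH Δ t (aggFlow Δ xt)) lamt) {q : P} {α ε : ℝ} {xH xA : P → ℝ}
    (heq : IsEquilibrium Δ t α xH xA)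
    (hclose : ∀ p, |CH Δ t (aggFlow Δ fun r => xH r + xA r) p - CH Δ t (aggFlow Δ xt) p| ≤ ε)
    (hgapH : ∀ p, ¬ 0 < xt p → 2 * ε < CH Δ t (aggFlow Δ xt) p - lamt)
    (hgapA : ∀ p, p ≠ q → 4 * ε < CA Δ t (aggFlow Δ xt) p - CA Δ t (aggFlow Δ xt) q) :
    (∀ p, ¬ 0 < xt p → xH p = 0) ∧ xA = Pi.single q α := by
  have hcloseA : ∀ p, |CA Δ t (aggFlow Δ fun r => xH r + xA r) p - CA Δ t (aggFlow Δ xt) p|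
      ≤ 2 * ε := fun p => by
    rw [CA_sub_CA hlin, abs_mul, abs_two]
    exact mul_le_mul_of_nonneg_left (hclose p) zero_le_two
  obtain ⟨hxH0, hxA0, -, hxA1, lamH, lamA, hw⟩ := heq
  obtain ⟨p₀, hp₀⟩ := exists_pos_of_sum_eq_one hxt1
  have hxA : ∀ p, p ≠ q → xA p = 0 := fun p hp =>
    IsWardrop.eq_zero_of_add_lt (fun p => (hw p).2) hcloseA (hxA0 p) (r := q)
      (by linarith [hgapA p hp])
  refine ⟨fun p hp => IsWardrop.eq_zero_of_add_lt (fun p => (hw p).1) hclose (hxH0 p) (r := p₀)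
    (by rw [(hlamt p₀).2 hp₀]; linarith [hgapH p hp]), funext fun p => ?_⟩
  rcases eq_or_ne p q with rfl | hp
  · rw [Pi.single_eq_same, ← hxA1, sum_eq_single p (fun r _ hr => hxA r hr) (by simp)]
  · rw [Pi.single_eq_of_ne hp, hxA p hp]

theorem pos_of_abs_CH_sub_CH_le [DecidableEq L] [DecidableEq P]
    (hlin : ∀ a z, t a z = k a * z + b a) (hk : ∀ a, 0 < k a) {xt xH : P → ℝ} (hxt0 : 0 ≤ xt)
    (hxH : ∀ p, ¬ 0 < xt p → xH p = 0) (q : P) {α K : ℝ} (hα : 0 ≤ α)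
    (hclose : ∀ p, |CH Δ t (aggFlow Δ fun r => xH r + (Pi.single q α : P → ℝ) r) p
      - CH Δ t (aggFlow Δ xt) p| ≤ K * α)
    (DV : Matrix L {p // 0 < xt p} ℝ) (hDV : DV = of fun a v => Δ a v.1)
    (hDV_inj : Function.Injective DV.mulVec) (v : {p // 0 < xt p})
    (hv : α * ∑ w, |(DVᵀ * diagonal k * DV)⁻¹ v w| * (K + |(DVᵀ *ᵥ fun a => k a * Δ a q) w|)
      < xt v) :
    0 < xH v := by
  have hy := abs_le_of_abs_mulVec_le (posDef_gram hk hDV_inj).isUnit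
    (B := fun w => K + |(DVᵀ *ᵥ fun a => k a * Δ a q) w|) (fun w => by
      rw [gram_mulVec_sub hlin hxt0 hxH q α DV hDV, mul_add]
      refine (abs_sub _ _).trans (add_le_add ((hclose w).trans_eq (mul_comm _ _)) ?_)
      rw [abs_mul, abs_of_nonneg hα]) v
  linarith [abs_le.1 hy]

theorem multiplier_sub_eq [DecidableEq L] [DecidableEq P] (hlin : ∀ a z, t a z = k a * z + b a)
    (hk : ∀ a, 0 < k a) {xt xH : P → ℝ} {lamt lamH α : ℝ} (q : P) (hxt0 : 0 ≤ xt)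
    (hxt1 : ∑ p, xt p = 1) (hlamt : IsWardrop xt (CH Δ t (aggFlow Δ xt)) lamt)
    (hxH1 : ∑ p, xH p = 1 - α) (hxH : ∀ p, ¬ 0 < xt p → xH p = 0)
    (hlamH : ∀ p, 0 < xt p →
      CH Δ t (aggFlow Δ fun r => xH r + (Pi.single q α : P → ℝ) r) p = lamH)
    (DV : Matrix L {p // 0 < xt p} ℝ) (hDV : DV = of fun a v => Δ a v.1)
    (hDV_inj : Function.Injective DV.mulVec) :
    lamH - lamt = α * ((dotProduct (fun _ => (1:ℝ))
        ((DVᵀ * diagonal k * DV)⁻¹ *ᵥ (DVᵀ *ᵥ fun a => k a * Δ a q)) - 1) /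
      dotProduct (fun _ => (1:ℝ)) ((DVᵀ * diagonal k * DV)⁻¹ *ᵥ fun _ => (1:ℝ))) := by
  obtain ⟨p₀, hp₀⟩ := exists_pos_of_sum_eq_one hxt1
  have : Nonempty {p // 0 < xt p} := ⟨⟨p₀, hp₀⟩⟩
  refine eq_mul_of_mulVec_eq (posDef_gram hk hDV_inj)
    ((gram_mulVec_sub hlin hxt0 hxH q α DV hDV).trans
      (funext fun v => by rw [hlamH v v.2, (hlamt v).2 v.2])) ?_
  rw [sum_subtype_pos_eq_sum (z := fun p => xH p - xt p) fun p hp => by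
    rw [hxH p hp, le_antisymm (not_lt.1 hp) (hxt0 p), sub_self], sum_sub_distrib, hxH1, hxt1]
  ring

end Support

theorem deterioration_condition_general {L P : Type*} [Fintype L] [Fintype P]
    [DecidableEq L] [DecidableEq P]
    (Δ : L → P → ℝ) (hΔ : ∀ a p, Δ a p = 0 ∨ Δ a p = 1)
    (t : L → ℝ → ℝ) (k b : L → ℝ)
    (hk : ∀ a, 0 < k a)
    (hlin : ∀ a, ∀ z : ℝ, t a z = k a * z + b a)
    (xt : P → ℝ) (hxt0 : ∀ p, 0 ≤ xt p) (hxt1 : ∑ p, xt p = 1)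
    (lamt : ℝ)
    (hlamt : ∀ p : P, lamt ≤ CH Δ t (aggFlow Δ xt) p ∧
      (0 < xt p → CH Δ t (aggFlow Δ xt) p = lamt))
    (DV : Matrix L {p : P // 0 < xt p} ℝ)
    (hDV : DV = Matrix.of fun a (v : {p : P // 0 < xt p}) => Δ a v.1)
    (hindep : ∀ y : {p : P // 0 < xt p} → ℝ, DV.mulVec y = 0 → y = 0)
    (q : P)
    (hqmin : ∀ p : P, p ≠ q →
      CA Δ t (aggFlow Δ xt) q < CA Δ t (aggFlow Δ xt) p)
    (hunused : ∀ p : P, ¬ 0 < xt p → lamt < CH Δ t (aggFlow Δ xt) p)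
    (γ : ℝ)
    (hγ : γ = (dotProduct (fun _ => (1:ℝ))
        ((DV.transpose * Matrix.diagonal k * DV)⁻¹.mulVec
          (DV.transpose.mulVec (fun a => k a * Δ a q))) - 1) /
      dotProduct (fun _ => (1:ℝ))
        ((DV.transpose * Matrix.diagonal k * DV)⁻¹.mulVec (fun _ => (1:ℝ))))
    (hpos : 0 < CH Δ t (aggFlow Δ xt) q - lamt + γ) :
    ∃ α₀ > (0:ℝ), ∀ α : ℝ, 0 < α → α < α₀ →
      ∀ xH xA : P → ℝ, IsEquilibrium Δ t α xH xA →
        Scost t (aggFlow Δ xt) < Scost t (aggFlow Δ (fun r => xH r + xA r)) := by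
  set ft := aggFlow Δ xt
  set K := ∑ a, k a
  have hΔ01 : ∀ a p, 0 ≤ Δ a p ∧ Δ a p ≤ 1 := fun a p => by rcases hΔ a p with h | h <;> simp [h]
  have hDV_inj : Function.Injective DV.mulVec := fun y y' h =>
    sub_eq_zero.1 (hindep _ (by rw [mulVec_sub, h, sub_self]))
  set Minv := (DVᵀ * diagonal k * DV)⁻¹
  set g := DVᵀ *ᵥ fun a => k a * Δ a q
  -- `α₀` keeps the gaps (c), (b) and `x̃ > 0` on `𝓥` open against the `O(α)` perturbation
  obtain ⟨α₀, hα₀, hsmall⟩ := Metric.eventually_nhds_iff.1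
    ((eventually_forall_mul_lt (fun _ => 2 * K) (fun p : {p // ¬ 0 < xt p} => CH Δ t ft p - lamt)
      fun p => sub_pos.2 (hunused p p.2)).and
    ((eventually_forall_mul_lt (fun _ => 4 * K) (fun p : {p // p ≠ q} => CA Δ t ft p - CA Δ t ft q)
      fun p => sub_pos.2 (hqmin p p.2)).and
    (eventually_forall_mul_lt (fun v => ∑ w, |Minv v w| * (K + |g w|))
      (fun v : {p // 0 < xt p} => xt v) fun v => v.2)))
  refine ⟨α₀, hα₀, fun α hα hαα₀ xH xA heq => ?_⟩
  obtain ⟨hgapH, hgapA, hgapV⟩ := hsmall (by rwa [Real.dist_0_eq_abs, abs_of_pos hα])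
  have hclose := abs_CH_sub_CH_le hlin (fun a => (hk a).le) hΔ01 hα.le
    (sum_mul_sq_aggFlow_sub_le hlin (fun a => (hk a).le) hΔ01 hxt0 hxt1 hlamt heq)
  obtain ⟨hxH, rfl⟩ := isEquilibrium_support hlin hxt1 hlamt heq hclose
    (fun p hp => by linarith [hgapH ⟨p, hp⟩]) fun p hp => by linarith [hgapA ⟨p, hp⟩]
  obtain ⟨hxH0, -, hxH1, -, lamH, _, hw⟩ := heq
  have hlamH : ∀ p, 0 < xt p → CH Δ t (aggFlow Δ fun r => xH r + (Pi.single q α : P → ℝ) r) p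
      = lamH := fun p hp => (hw p).1.2 <| pos_of_abs_CH_sub_CH_le hlin hk hxt0 hxH q hα.le hclose
        DV hDV hDV_inj ⟨p, hp⟩ (hgapV ⟨p, hp⟩)
  rw [← sub_pos, Scost_sub_eq_of_support hlin q hxt0 hxt1 hlamt hxH0 hxH1 hxH hlamH,
    multiplier_sub_eq hlin hk q hxt0 hxt1 hlamt hxH1 hxH hlamH DV hDV hDV_inj, ← hγ]
  have := sum_nonneg fun a (_ : a ∈ univ) => mul_nonneg (hk a).le
    (sq_nonneg (aggFlow Δ (fun r => xH r + (Pi.single q α : P → ℝ) r) a - ft a))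
  nlinarith [mul_pos hα hpos]

/-- Theorem 4 (deterioration condition): with linear travel times
`t_a(z) = k_a z + b_a`, a baseline equilibrium `x̃` with multiplier `λ̃^H` and
support `𝓥`, if the columns of `Δ_𝓥` are linearly independent, `q` is the unique
minimizer of `C^A` over all paths and is unused at the baseline, every unused
path is strictly more costly than `λ̃^H`, and
`C_q^H(Δx̃) − λ̃^H + γ > 0` with
`γ = (𝟙ᵀ M⁻¹ Δ_𝓥ᵀ K Δ e_q − 1)/(𝟙ᵀ M⁻¹ 𝟙)`, then for all sufficiently small
positive autonomous fractions `α` the equilibrium social cost strictly exceeds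
the baseline social cost. -/
theorem deterioration_condition {L P : Type*} [Fintype L] [Fintype P] [Nonempty P]
    [DecidableEq L] [DecidableEq P]
    (Δ : L → P → ℝ) (hΔ : ∀ a p, Δ a p = 0 ∨ Δ a p = 1)
    (t : L → ℝ → ℝ) (k b : L → ℝ)
    (hk : ∀ a, 0 < k a) (hb : ∀ a, 0 ≤ b a)
    (hlin : ∀ a, ∀ z : ℝ, t a z = k a * z + b a)
    (xt : P → ℝ) (hxt0 : ∀ p, 0 ≤ xt p) (hxt1 : ∑ p, xt p = 1)
    (lamt : ℝ)
    (hlamt : ∀ p : P, lamt ≤ CH Δ t (aggFlow Δ xt) p ∧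
      (0 < xt p → CH Δ t (aggFlow Δ xt) p = lamt))
    (DV : Matrix L {p : P // 0 < xt p} ℝ)
    (hDV : DV = Matrix.of fun a (v : {p : P // 0 < xt p}) => Δ a v.1)
    (hindep : ∀ y : {p : P // 0 < xt p} → ℝ, DV.mulVec y = 0 → y = 0)
    (q : P)
    (hqmin : ∀ p : P, p ≠ q →
      CA Δ t (aggFlow Δ xt) q < CA Δ t (aggFlow Δ xt) p)
    (hqV : ¬ 0 < xt q)
    (hunused : ∀ p : P, ¬ 0 < xt p → lamt < CH Δ t (aggFlow Δ xt) p)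
    (γ : ℝ)
    (hγ : γ = (dotProduct (fun _ => (1:ℝ))
        ((DV.transpose * Matrix.diagonal k * DV)⁻¹.mulVec
          (DV.transpose.mulVec (fun a => k a * Δ a q))) - 1) /
      dotProduct (fun _ => (1:ℝ))
        ((DV.transpose * Matrix.diagonal k * DV)⁻¹.mulVec (fun _ => (1:ℝ))))
    (hpos : 0 < CH Δ t (aggFlow Δ xt) q - lamt + γ) :
    ∃ α₀ > (0:ℝ), ∀ α : ℝ, 0 < α → α < α₀ →
      ∀ xH xA : P → ℝ, IsEquilibrium Δ t α xH xA →
        Scost t (aggFlow Δ xt) < Scost t (aggFlow Δ (fun r => xH r + xA r)) :=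
  deterioration_condition_general Δ hΔ t k b hk hlin xt hxt0 hxt1 lamt hlamt DV hDV hindep q hqmin
    hunused γ hγ hpos
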